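/- arXiv:1501.03238 — 2 statements merged into one kernel-verified Lean document; each statement's English description precedes it below -/
import Mathlib

section
/- Fix a word P over a complementary alphabet admitting at least one P-valid plane tree. In the directed graph G_P^+ whose vertices are P-valid plane trees and whose directed edges are valid type 2 local moves, the greedy tree T₀ is the unique sink, and from every P-valid plane tree there is a directed path of type 2 moves to T₀. -/
/-!
Model: a plane tree with n edges is encoded as a non-crossing perfect matching
on the 2n half-edge positions 0,…,2n-1 (0-indexed); a matched pair (i,j) with
i < j is the edge e(i,j) with left half-edge i and right half-edge j.
-/

/-- `M` is a perfect matching on positions `0,…,2n-1`. -/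
def IsMatching (n : ℕ) (M : Finset (ℕ × ℕ)) : Prop :=
  (∀ p ∈ M, p.1 < p.2 ∧ p.2 < 2 * n) ∧
  (∀ k, k < 2 * n → ∃! p, p ∈ M ∧ (p.1 = k ∨ p.2 = k))

/-- No two matched pairs cross. -/
def NonCrossing (M : Finset (ℕ × ℕ)) : Prop :=
  ∀ p ∈ M, ∀ q ∈ M, ¬ (p.1 < q.1 ∧ q.1 < p.2 ∧ p.2 < q.2)

/-- A plane tree on `n` edges: a non-crossing perfect matching on `0,…,2n-1`. -/
def IsPlaneTree (n : ℕ) (M : Finset (ℕ × ℕ)) : Prop :=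
  IsMatching n M ∧ NonCrossing M

/-- The plane tree `M` is valid for the word `P` (with complementation `comp`):
every matched pair consists of complementary letters. -/
def IsValid {A : Type*} (P : ℕ → A) (comp : A → A) (M : Finset (ℕ × ℕ)) : Prop :=
  ∀ p ∈ M, P p.2 = comp (P p.1)

/-- One pass of the greedy algorithm over positions `0,…,N-1`:
state is (stack of currently unmatched positions, most recent first;
list of matched pairs `(j,i)` with `j < i`). At each position `i`, if the most
recent unmatched position `j` carries a complementary letter, match `(j,i)`;
otherwise leave `i` unmatched. -/
def greedy {A : Type*} [DecidableEq A] (P : ℕ → A) (comp : A → A) :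
    ℕ → List ℕ × List (ℕ × ℕ)
  | 0 => ([], [])
  | (i+1) =>
    let s := greedy P comp i
    match s.1 with
    | [] => ([i], s.2)
    | j :: rest =>
      if P i = comp (P j) then (rest, (j, i) :: s.2)
      else (i :: j :: rest, s.2)

/-- The partial matching produced by the greedy algorithm on a word of length `2n`. -/
def greedyMatching {A : Type*} [DecidableEq A] (P : ℕ → A) (comp : A → A) (n : ℕ) :
    Finset (ℕ × ℕ) :=
  ((greedy P comp (2 * n)).2).toFinset

/-- A local move of type 2: two nested *adjacent* edges `e(i,j')`, `e(j,i')`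
with `i < j < i' < j'` (adjacency: no edge lies strictly between them, i.e. no
edge `(a,b)` with `i < a < j` and `i' < b < j'`) are replaced by `e(i,j)` and
`e(i',j')`. -/
def Type2Move (M M' : Finset (ℕ × ℕ)) : Prop :=
  ∃ i j i' j', i < j ∧ j < i' ∧ i' < j' ∧
    (i, j') ∈ M ∧ (j, i') ∈ M ∧
    (¬ ∃ q ∈ M, i < q.1 ∧ q.1 < j ∧ i' < q.2 ∧ q.2 < j') ∧
    M' = insert (i, j) (insert (i', j') ((M.erase (i, j')).erase (j, i')))

/-- A valid local move of type 2: a type 2 move whose initial and resulting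
plane trees are both `P`-valid. -/
def ValidType2Move {A : Type*} (P : ℕ → A) (comp : A → A)
    (M M' : Finset (ℕ × ℕ)) : Prop :=
  Type2Move M M' ∧ IsValid P comp M ∧ IsValid P comp M'

/-!
A valid type 2 move strictly shortens the total edge length `∑ (j - i)`, so from every valid
plane tree a path of valid type 2 moves reaches a sink. At a sink no adjacent nest
`e(i,j')`, `e(j,i')` carries complementary letters at `i` and `j`. For such a tree, the greedy
stack after reading the positions `< t` holds exactly the left ends of the edges still open at
`t`, in decreasing order, so the greedy algorithm reproduces the tree. Hence every sink is `T₀`,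
and descending from `T₀` itself shows that `T₀` is a sink.
-/

def IsEndpoint (k : ℕ) (p : ℕ × ℕ) : Prop := p.1 = k ∨ p.2 = k

section Matching

variable {n : ℕ} {M : Finset (ℕ × ℕ)}

theorem IsMatching.eq_of_isEndpoint (hM : IsMatching n M) {p q : ℕ × ℕ} {k : ℕ}
    (hp : p ∈ M) (hq : q ∈ M) (hpk : IsEndpoint k p) (hqk : IsEndpoint k q) : p = q := by
  have hk : k < 2 * n := by
    have := hM.1 p hp
    rcases hpk with rfl | rfl <;> omega
  obtain ⟨r, -, hr⟩ := hM.2 k hk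
  exact (hr p ⟨hp, hpk⟩).trans (hr q ⟨hq, hqk⟩).symm

theorem IsMatching.exchange (hM : IsMatching n M) {p₁ p₂ q₁ q₂ : ℕ × ℕ}
    (hp₁ : p₁ ∈ M) (hp₂ : p₂ ∈ M) (hq₁ : q₁.1 < q₁.2) (hq₂ : q₂.1 < q₂.2)
    (hends : ∀ k, IsEndpoint k q₁ ∨ IsEndpoint k q₂ ↔ IsEndpoint k p₁ ∨ IsEndpoint k p₂)
    (hdisj : ∀ k, IsEndpoint k q₁ → ¬ IsEndpoint k q₂) :
    IsMatching n (insert q₁ (insert q₂ ((M.erase p₁).erase p₂))) := by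
  have hmem : ∀ r, r ∈ insert q₁ (insert q₂ ((M.erase p₁).erase p₂)) ↔
      r = q₁ ∨ r = q₂ ∨ (r ∈ M ∧ r ≠ p₁ ∧ r ≠ p₂) := by
    intro r
    simp only [Finset.mem_insert, Finset.mem_erase]
    tauto
  have hbound : ∀ k, IsEndpoint k p₁ ∨ IsEndpoint k p₂ → k < 2 * n := by
    rintro k (⟨rfl | rfl⟩ | ⟨rfl | rfl⟩)
    all_goals first | have := hM.1 p₁ hp₁; omega | have := hM.1 p₂ hp₂; omega
  refine ⟨fun r hr => ?_, fun k hk => ?_⟩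
  · rcases (hmem r).1 hr with rfl | rfl | ⟨hr, -, -⟩
    · exact ⟨hq₁, hbound _ ((hends _).1 (Or.inl (Or.inr rfl)))⟩
    · exact ⟨hq₂, hbound _ ((hends _).1 (Or.inr (Or.inr rfl)))⟩
    · exact hM.1 r hr
  by_cases hk' : IsEndpoint k p₁ ∨ IsEndpoint k p₂
  · have hold : ∀ r ∈ M, r ≠ p₁ → r ≠ p₂ → ¬ IsEndpoint k r := by
      intro r hr h₁ h₂ hrk
      rcases hk' with h | h
      · exact h₁ (hM.eq_of_isEndpoint hr hp₁ hrk h)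
      · exact h₂ (hM.eq_of_isEndpoint hr hp₂ hrk h)
    rcases (hends k).2 hk' with h | h
    · refine ⟨q₁, ⟨(hmem _).2 (Or.inl rfl), h⟩, fun r ⟨hr, hrk⟩ => ?_⟩
      rcases (hmem r).1 hr with rfl | rfl | ⟨hr, h₁, h₂⟩
      · rfl
      · exact absurd hrk (hdisj k h)
      · exact absurd hrk (hold r hr h₁ h₂)
    · refine ⟨q₂, ⟨(hmem _).2 (Or.inr (Or.inl rfl)), h⟩, fun r ⟨hr, hrk⟩ => ?_⟩
      rcases (hmem r).1 hr with rfl | rfl | ⟨hr, h₁, h₂⟩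
      · exact absurd h (hdisj k hrk)
      · rfl
      · exact absurd hrk (hold r hr h₁ h₂)
  · obtain ⟨p₀, ⟨hp₀, hp₀k⟩, -⟩ := hM.2 k hk
    have h₁ : p₀ ≠ p₁ := by rintro rfl; exact hk' (Or.inl hp₀k)
    have h₂ : p₀ ≠ p₂ := by rintro rfl; exact hk' (Or.inr hp₀k)
    refine ⟨p₀, ⟨(hmem _).2 (Or.inr (Or.inr ⟨hp₀, h₁, h₂⟩)), hp₀k⟩, fun r ⟨hr, hrk⟩ => ?_⟩
    rcases (hmem r).1 hr with rfl | rfl | ⟨hr, -, -⟩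
    · exact absurd ((hends k).1 (Or.inl hrk)) hk'
    · exact absurd ((hends k).1 (Or.inr hrk)) hk'
    · exact hM.eq_of_isEndpoint hr hp₀ hrk hp₀k

end Matching

def IsAdjacentNest (M : Finset (ℕ × ℕ)) (i j i' j' : ℕ) : Prop :=
  i < j ∧ j < i' ∧ i' < j' ∧ (i, j') ∈ M ∧ (j, i') ∈ M ∧
    ¬ ∃ q ∈ M, i < q.1 ∧ q.1 < j ∧ i' < q.2 ∧ q.2 < j'

def unnest (M : Finset (ℕ × ℕ)) (i j i' j' : ℕ) : Finset (ℕ × ℕ) :=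
  insert (i, j) (insert (i', j') ((M.erase (i, j')).erase (j, i')))

theorem type2Move_iff {M M' : Finset (ℕ × ℕ)} :
    Type2Move M M' ↔ ∃ i j i' j', IsAdjacentNest M i j i' j' ∧ M' = unnest M i j i' j' := by
  simp only [Type2Move, IsAdjacentNest, unnest, and_assoc]

theorem mem_unnest {M : Finset (ℕ × ℕ)} {i j i' j' : ℕ} {q : ℕ × ℕ} :
    q ∈ unnest M i j i' j' ↔ q = (i, j) ∨ q = (i', j') ∨ (q ∈ M ∧ q ≠ (i, j') ∧ q ≠ (j, i')) := by
  simp only [unnest, Finset.mem_insert, Finset.mem_erase]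
  tauto

def totalLength (M : Finset (ℕ × ℕ)) : ℕ := ∑ p ∈ M, (p.2 - p.1)

theorem Finset.sum_insert_le_add {α β : Type*} [DecidableEq α] [AddCommMonoid β]
    [PartialOrder β] [CanonicallyOrderedAdd β] (s : Finset α) (a : α) (f : α → β) :
    ∑ x ∈ insert a s, f x ≤ f a + ∑ x ∈ s, f x := by
  by_cases ha : a ∈ s
  · rw [Finset.insert_eq_of_mem ha]
    exact le_add_self
  · rw [Finset.sum_insert ha]

namespace IsAdjacentNest

variable {n : ℕ} {M : Finset (ℕ × ℕ)} {i j i' j' : ℕ}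

theorem isMatching_unnest (h : IsAdjacentNest M i j i' j') (hM : IsMatching n M) :
    IsMatching n (unnest M i j i' j') := by
  obtain ⟨hij, hji', hi'j', hout, hin, -⟩ := h
  exact hM.exchange hout hin hij hi'j' (fun k => by simp only [IsEndpoint]; omega)
    (fun k => by simp only [IsEndpoint]; omega)

theorem separated (h : IsAdjacentNest M i j i' j') (hM : IsPlaneTree n M) {q : ℕ × ℕ}
    (hq : q ∈ M) (hq₁ : q ≠ (i, j')) (hq₂ : q ≠ (j, i')) :
    q.2 < i ∨ (q.1 < i ∧ j' < q.2) ∨ (i < q.1 ∧ q.2 < j) ∨ (j < q.1 ∧ q.2 < i') ∨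
      (i' < q.1 ∧ q.2 < j') ∨ j' < q.1 := by
  obtain ⟨hij, hji', hi'j', hout, hin, hadj⟩ := h
  have havoid : ∀ k, IsEndpoint k q → ¬ (IsEndpoint k (i, j') ∨ IsEndpoint k (j, i')) := by
    rintro k hk (hk' | hk')
    · exact hq₁ (hM.1.eq_of_isEndpoint hq hout hk hk')
    · exact hq₂ (hM.1.eq_of_isEndpoint hq hin hk hk')
  have h₁ := havoid q.1 (Or.inl rfl)
  have h₂ := havoid q.2 (Or.inr rfl)
  have hq12 := (hM.1.1 q hq).1
  have c₁ := hM.2 q hq _ hout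
  have c₂ := hM.2 _ hout q hq
  have c₃ := hM.2 q hq _ hin
  have c₄ := hM.2 _ hin q hq
  have hnot : ¬ (i < q.1 ∧ q.1 < j ∧ i' < q.2 ∧ q.2 < j') := fun hb => hadj ⟨q, hq, hb⟩
  simp only [IsEndpoint] at h₁ h₂ c₁ c₂ c₃ c₄
  omega

theorem isPlaneTree_unnest (h : IsAdjacentNest M i j i' j') (hM : IsPlaneTree n M) :
    IsPlaneTree n (unnest M i j i' j') := by
  refine ⟨h.isMatching_unnest hM.1, fun p hp q hq => ?_⟩
  have hsep := fun {r} hr h₁ h₂ => h.separated hM (q := r) hr h₁ h₂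
  obtain ⟨hij, hji', hi'j', -, -, -⟩ := h
  rw [mem_unnest] at hp hq
  rcases hp with rfl | rfl | ⟨hp, hp₁, hp₂⟩ <;> rcases hq with rfl | rfl | ⟨hq, hq₁, hq₂⟩
  all_goals first
    | exact hM.2 p hp q hq
    | have := hsep hp hp₁ hp₂; omega
    | have := hsep hq hq₁ hq₂; omega
    | omega

theorem totalLength_unnest_lt (h : IsAdjacentNest M i j i' j') :
    totalLength (unnest M i j i' j') < totalLength M := by
  obtain ⟨hij, hji', hi'j', hout, hin, -⟩ := h
  have hin' : (j, i') ∈ M.erase (i, j') :=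
    Finset.mem_erase.2 ⟨by simp only [ne_eq, Prod.mk.injEq]; omega, hin⟩
  have hM := Finset.sum_erase_add _ (fun p : ℕ × ℕ => p.2 - p.1) hout
  rw [← Finset.sum_erase_add _ _ hin'] at hM
  have h₁ := Finset.sum_insert_le_add (insert (i', j') ((M.erase (i, j')).erase (j, i')))
    (i, j) (fun p : ℕ × ℕ => p.2 - p.1)
  have h₂ := Finset.sum_insert_le_add ((M.erase (i, j')).erase (j, i'))
    (i', j') (fun p : ℕ × ℕ => p.2 - p.1)
  simp only [totalLength, unnest] at h₁ h₂ hM ⊢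
  omega

end IsAdjacentNest

theorem IsValid.unnest {A : Type*} {P : ℕ → A} {comp : A → A} {M : Finset (ℕ × ℕ)}
    {i j i' j' : ℕ} (hinv : Function.Involutive comp) (hval : IsValid P comp M)
    (h : IsAdjacentNest M i j i' j') (hPj : P j = comp (P i)) :
    IsValid P comp (unnest M i j i' j') := by
  intro p hp
  rcases mem_unnest.1 hp with rfl | rfl | ⟨hp, -, -⟩
  · exact hPj
  · have hout : P j' = comp (P i) := hval _ h.2.2.2.1
    have hin : P i' = comp (P j) := hval _ h.2.2.2.2.1
    show P j' = comp (P i')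
    rw [hout, hin, hPj, hinv]
  · exact hval p hp

theorem exists_reflTransGen_validType2Move_sink {A : Type*} {P : ℕ → A} {comp : A → A}
    {n : ℕ} {M : Finset (ℕ × ℕ)} (hM : IsPlaneTree n M) (hval : IsValid P comp M) :
    ∃ N, IsPlaneTree n N ∧ IsValid P comp N ∧
      Relation.ReflTransGen (ValidType2Move P comp) M N ∧
      ¬ ∃ N', ValidType2Move P comp N N' := by
  induction hm : totalLength M using Nat.strong_induction_on generalizing M with
  | _ m ih =>
    by_cases hsink : ∃ M', ValidType2Move P comp M M'
    · obtain ⟨M', hmove, -, hval'⟩ := hsink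
      obtain ⟨i, j, i', j', h, rfl⟩ := type2Move_iff.1 hmove
      obtain ⟨N, hN, hvalN, hpath, hsinkN⟩ :=
        ih _ (hm ▸ h.totalLength_unnest_lt) (h.isPlaneTree_unnest hM) hval' rfl
      exact ⟨N, hN, hvalN, .head ⟨hmove, hval, hval'⟩ hpath, hsinkN⟩
    · exact ⟨M, hM, hval, .refl, hsink⟩

def IsLocallyGreedy {A : Type*} (P : ℕ → A) (comp : A → A) (M : Finset (ℕ × ℕ)) : Prop :=
  ∀ i j i' j', IsAdjacentNest M i j i' j' → P j ≠ comp (P i)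

theorem isLocallyGreedy_of_not_exists_validType2Move {A : Type*} {P : ℕ → A} {comp : A → A}
    {M : Finset (ℕ × ℕ)} (hinv : Function.Involutive comp) (hval : IsValid P comp M)
    (hsink : ¬ ∃ M', ValidType2Move P comp M M') : IsLocallyGreedy P comp M :=
  fun i j i' j' h hPj =>
    hsink ⟨_, type2Move_iff.2 ⟨i, j, i', j', h, rfl⟩, hval, hval.unnest hinv h hPj⟩

section Greedy

variable {A : Type*} [DecidableEq A] {P : ℕ → A} {comp : A → A} {t : ℕ} {S : List ℕ}
  {L : List (ℕ × ℕ)}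

theorem greedy_succ_of_push (hg : greedy P comp t = (S, L))
    (hS : ∀ j rest, S = j :: rest → P t ≠ comp (P j)) :
    greedy P comp (t + 1) = (t :: S, L) := by
  cases S with
  | nil => simp only [greedy, hg]
  | cons j rest => simp only [greedy, hg, hS j rest rfl, if_false]

theorem greedy_succ_of_pop {j : ℕ} (hg : greedy P comp t = (j :: S, L))
    (hPt : P t = comp (P j)) : greedy P comp (t + 1) = (S, (j, t) :: L) := by
  simp only [greedy, hg, hPt, if_true]

end Greedy

def IsOpenAt (M : Finset (ℕ × ℕ)) (t k : ℕ) : Prop := k < t ∧ ∃ b, (k, b) ∈ M ∧ t ≤ b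

/-- The state `(stack, matched pairs)` of the greedy algorithm after reading the positions
`< t` agrees with the tree `M`. -/
structure GreedyInvariant (M : Finset (ℕ × ℕ)) (t : ℕ) (S : List ℕ) (L : List (ℕ × ℕ)) :
    Prop where
  stack_sorted : S.Pairwise (· > ·)
  mem_stack : ∀ k, k ∈ S ↔ IsOpenAt M t k
  mem_matched : ∀ p, p ∈ L ↔ p ∈ M ∧ p.2 < t

namespace GreedyInvariant

variable {n : ℕ} {M : Finset (ℕ × ℕ)} {t j : ℕ} {S : List ℕ} {L : List (ℕ × ℕ)}

theorem push (hinv : GreedyInvariant M t S L) (hM : IsMatching n M) {b : ℕ} (ht : (t, b) ∈ M) :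
    GreedyInvariant M (t + 1) (t :: S) L := by
  have hnot_right : ∀ q ∈ M, q.2 ≠ t := fun q hq hqt => by
    have := hM.eq_of_isEndpoint hq ht (Or.inr hqt) (Or.inl rfl)
    have := (hM.1 q hq).1
    simp_all
  have hbt := (hM.1 _ ht).1
  refine ⟨List.pairwise_cons.2 ⟨fun k hk => ((hinv.mem_stack k).1 hk).1, hinv.stack_sorted⟩,
    fun k => ?_, fun p => ?_⟩
  · rw [List.mem_cons, hinv.mem_stack]
    constructor
    · rintro (rfl | ⟨hk, c, hc, htc⟩)
      · exact ⟨by omega, b, ht, hbt⟩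
      · exact ⟨by omega, c, hc, by have := hnot_right _ hc; omega⟩
    · rintro ⟨hk, c, hc, htc⟩
      rcases Nat.lt_succ_iff_lt_or_eq.1 hk with hk | rfl
      · exact Or.inr ⟨hk, c, hc, by omega⟩
      · exact Or.inl rfl
  · rw [hinv.mem_matched]
    have := hnot_right p
    constructor <;> rintro ⟨hp, hpt⟩ <;> exact ⟨hp, by have := this hp; omega⟩

theorem pop (hinv : GreedyInvariant M t (j :: S) L) (hM : IsMatching n M) (ht : (j, t) ∈ M) :
    GreedyInvariant M (t + 1) S ((j, t) :: L) := by
  obtain ⟨hsorted, hS⟩ := List.pairwise_cons.1 hinv.stack_sorted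
  refine ⟨hS, fun k => ?_, fun p => ?_⟩
  · constructor
    · intro hk
      obtain ⟨hkt, c, hc, htc⟩ := (hinv.mem_stack k).1 (List.mem_cons_of_mem _ hk)
      have hkj := hsorted k hk
      have hct : c ≠ t := by
        rintro rfl
        have := hM.eq_of_isEndpoint hc ht (Or.inr rfl) (Or.inr rfl)
        simp only [Prod.mk.injEq] at this
        omega
      exact ⟨by omega, c, hc, by omega⟩
    · rintro ⟨hkt, c, hc, htc⟩
      have hkj : k ≠ j := by
        rintro rfl
        have := hM.eq_of_isEndpoint hc ht (Or.inl rfl) (Or.inl rfl)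
        simp only [Prod.mk.injEq] at this
        omega
      have hkt' : k ≠ t := by
        rintro rfl
        have := hM.eq_of_isEndpoint hc ht (Or.inl rfl) (Or.inr rfl)
        simp only [Prod.mk.injEq] at this
        omega
      have := (hinv.mem_stack k).2 ⟨by omega, c, hc, by omega⟩
      exact (List.mem_cons.1 this).resolve_left hkj
  · rw [List.mem_cons, hinv.mem_matched]
    constructor
    · rintro (rfl | ⟨hp, hpt⟩)
      · exact ⟨ht, by omega⟩
      · exact ⟨hp, by omega⟩
    · rintro ⟨hp, hpt⟩
      rcases Nat.lt_succ_iff_lt_or_eq.1 hpt with hpt | hpt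
      · exact Or.inr ⟨hp, hpt⟩
      · exact Or.inl (hM.eq_of_isEndpoint hp ht (Or.inr hpt) (Or.inr rfl))

/-- The top of the stack is larger than every other open left end, so an edge `(a, t)` closing
at `t` must start at the top, or it would cross the edge of the top. -/
theorem top_eq_of_mem (hinv : GreedyInvariant M t (j :: S) L) (hM : IsPlaneTree n M) {a : ℕ}
    (ht : (a, t) ∈ M) : j = a := by
  have hat := (hM.1.1 _ ht).1
  obtain ⟨hjt, c, hc, htc⟩ := (hinv.mem_stack j).1 List.mem_cons_self
  by_contra hja
  have haj : a < j := by
    rcases List.mem_cons.1 ((hinv.mem_stack a).2 ⟨hat, t, ht, le_rfl⟩) with h | h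
    · exact absurd h.symm hja
    · exact (List.pairwise_cons.1 hinv.stack_sorted).1 a h
  have hct : c ≠ t := by
    rintro rfl
    exact hja (congrArg Prod.fst (hM.1.eq_of_isEndpoint hc ht (Or.inr rfl) (Or.inr rfl)))
  exact hM.2 _ ht _ hc ⟨haj, hjt, by simp only; omega⟩

/-- An edge `(t, b)` opening at `t` is nested in the edge of the top `j` of the stack, and
nothing lies between them since every left end in `(j, t)` has already been closed. -/
theorem isAdjacentNest_of_mem (hinv : GreedyInvariant M t (j :: S) L) (hM : IsPlaneTree n M)
    {b : ℕ} (ht : (t, b) ∈ M) : ∃ c, IsAdjacentNest M j t b c := by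
  have htb := (hM.1.1 _ ht).1
  obtain ⟨hjt, c, hc, htc⟩ := (hinv.mem_stack j).1 List.mem_cons_self
  have hct : c ≠ t := by
    rintro rfl
    have := hM.1.eq_of_isEndpoint hc ht (Or.inr rfl) (Or.inl rfl)
    simp only [Prod.mk.injEq] at this
    omega
  have hbc : b ≠ c := by
    rintro rfl
    have := hM.1.eq_of_isEndpoint hc ht (Or.inr rfl) (Or.inr rfl)
    simp only [Prod.mk.injEq] at this
    omega
  have hcross := hM.2 _ hc _ ht
  simp only at hcross
  refine ⟨c, hjt, htb, by omega, hc, ht, ?_⟩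
  rintro ⟨q, hq, hjq, hqt, hbq, hqc⟩
  have hq_open := (hinv.mem_stack q.1).2 ⟨hqt, q.2, hq, by omega⟩
  rcases List.mem_cons.1 hq_open with h | h
  · omega
  · have := (List.pairwise_cons.1 hinv.stack_sorted).1 _ h
    omega

end GreedyInvariant

theorem greedyInvariant_greedy {A : Type*} [DecidableEq A] {P : ℕ → A} {comp : A → A} {n : ℕ}
    {M : Finset (ℕ × ℕ)} (hM : IsPlaneTree n M) (hval : IsValid P comp M)
    (hgreedy : IsLocallyGreedy P comp M) :
    ∀ t ≤ 2 * n, GreedyInvariant M t (greedy P comp t).1 (greedy P comp t).2 := by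
  intro t
  induction t with
  | zero => intro; exact ⟨.nil, by simp [greedy, IsOpenAt], by simp [greedy]⟩
  | succ t ih =>
    intro ht
    have hinv := ih (by omega)
    rcases hg : greedy P comp t with ⟨S, L⟩
    rw [hg] at hinv
    obtain ⟨⟨a, b⟩, ⟨hp, hab⟩, -⟩ := hM.1.2 t (by omega)
    rcases hab with rfl | rfl
    · rw [greedy_succ_of_push hg fun j rest hS => ?_]
      · exact hinv.push hM.1 hp
      · subst hS
        obtain ⟨c, hnest⟩ := hinv.isAdjacentNest_of_mem hM hp
        exact hgreedy _ _ _ _ hnest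
    · obtain _ | ⟨j, S⟩ := S
      · exact absurd ((hinv.mem_stack a).2 ⟨(hM.1.1 _ hp).1, _, hp, le_rfl⟩) List.not_mem_nil
      · obtain rfl := hinv.top_eq_of_mem hM hp
        rw [greedy_succ_of_pop hg (hval _ hp)]
        exact hinv.pop hM.1 hp

theorem greedyMatching_eq_of_isLocallyGreedy {A : Type*} [DecidableEq A] {P : ℕ → A}
    {comp : A → A} {n : ℕ} {M : Finset (ℕ × ℕ)} (hM : IsPlaneTree n M)
    (hval : IsValid P comp M) (hgreedy : IsLocallyGreedy P comp M) :
    greedyMatching P comp n = M := by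
  ext p
  rw [greedyMatching, List.mem_toFinset,
    (greedyInvariant_greedy hM hval hgreedy (2 * n) le_rfl).mem_matched]
  exact ⟨And.left, fun hp => ⟨hp, (hM.1.1 p hp).2⟩⟩

theorem greedy_tree_unique_sink_general {A : Type*} [DecidableEq A]
    (comp : A → A) (hinv : Function.Involutive comp)
    (n : ℕ) (P : ℕ → A) :
    (∀ M : Finset (ℕ × ℕ), IsPlaneTree n M → IsValid P comp M →
      ((¬ ∃ M', ValidType2Move P comp M M') ↔ M = greedyMatching P comp n)) ∧
    (∀ M : Finset (ℕ × ℕ), IsPlaneTree n M → IsValid P comp M →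
      Relation.ReflTransGen (fun X Y => ValidType2Move P comp X Y)
        M (greedyMatching P comp n)) := by
  have sink_eq : ∀ N, IsPlaneTree n N → IsValid P comp N →
      (¬ ∃ N', ValidType2Move P comp N N') → N = greedyMatching P comp n :=
    fun N hN hval hsink => (greedyMatching_eq_of_isLocallyGreedy hN hval
      (isLocallyGreedy_of_not_exists_validType2Move hinv hval hsink)).symm
  refine ⟨fun M hM hval => ⟨sink_eq M hM hval, fun hM₀ => ?_⟩, fun M hM hval => ?_⟩ <;>
    obtain ⟨N, hN, hvalN, hpath, hsink⟩ := exists_reflTransGen_validType2Move_sink hM hval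
  · rwa [hM₀, ← sink_eq N hN hvalN hsink]
  · rwa [← sink_eq N hN hvalN hsink]

/-- In the directed graph `G_P⁺` (vertices the `P`-valid plane
trees, directed edges the valid type 2 local moves), the greedy tree `T₀` is
the unique sink, and every `P`-valid plane tree has a directed path of type 2
moves to `T₀`. -/
theorem greedy_tree_unique_sink {A : Type*} [DecidableEq A]
    (comp : A → A) (hinv : Function.Involutive comp) (hff : ∀ a, comp a ≠ a)
    (n : ℕ) (P : ℕ → A)
    (hex : ∃ M, IsPlaneTree n M ∧ IsValid P comp M) :
    (∀ M : Finset (ℕ × ℕ), IsPlaneTree n M → IsValid P comp M →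
      ((¬ ∃ M', ValidType2Move P comp M M') ↔ M = greedyMatching P comp n)) ∧
    (∀ M : Finset (ℕ × ℕ), IsPlaneTree n M → IsValid P comp M →
      Relation.ReflTransGen (fun X Y => ValidType2Move P comp X Y)
        M (greedyMatching P comp n)) :=
  greedy_tree_unique_sink_general comp hinv n P
end

section
/- If a word P of length 2n over a complementary alphabet has strictly fewer than C_n valid plane trees, then it has at most C_{n-1} valid plane trees. Equivalently, no word has k valid plane trees for any k with C_{n-1} < k < C_n. -/
/-!
Model: a plane tree with n edges is encoded as a non-crossing perfect matching
on the 2n half-edge positions `Fin (2*n)`; a matched pair (i,j) with i < j is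
the edge e(i,j). A word of length 2n is a function `Fin (2*n) → A`.
-/

/-- `M` is a perfect matching on the positions `Fin (2*n)`. -/
def IsMatchingF (n : ℕ) (M : Finset (Fin (2 * n) × Fin (2 * n))) : Prop :=
  (∀ p ∈ M, p.1 < p.2) ∧ (∀ k : Fin (2 * n), ∃! p, p ∈ M ∧ (p.1 = k ∨ p.2 = k))

/-- No two matched pairs cross. -/
def NonCrossingF (n : ℕ) (M : Finset (Fin (2 * n) × Fin (2 * n))) : Prop :=
  ∀ p ∈ M, ∀ q ∈ M, ¬ (p.1 < q.1 ∧ q.1 < p.2 ∧ p.2 < q.2)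

/-- A plane tree on `n` edges: a non-crossing perfect matching. -/
def IsPlaneTreeF (n : ℕ) (M : Finset (Fin (2 * n) × Fin (2 * n))) : Prop :=
  IsMatchingF n M ∧ NonCrossingF n M

/-- The plane tree `M` is valid for the word `P` (with complementation `comp`):
every matched pair consists of complementary letters. -/
def IsValidF {A : Type*} (n : ℕ) (P : Fin (2 * n) → A) (comp : A → A)
    (M : Finset (Fin (2 * n) × Fin (2 * n))) : Prop :=
  ∀ p ∈ M, P p.2 = comp (P p.1)

/-!
Let `b = P 0` and let `T` be the set of positions at which `P` agrees with the alternating word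
`b (comp b) b (comp b) ⋯`. The two ends of an arc of a non-crossing perfect matching enclose an
even number of positions, so they have opposite parities; hence every arc of a valid plane tree
has both ends in `T` or both ends outside `T`. If `T` is everything, every plane tree is valid,
and there are `C_n` of them. Otherwise a valid plane tree splits into non-crossing matchings of
`T` and of its complement, so there are at most `C_a * C_(n-a)` of them, where `|T| = 2a` and
`1 ≤ a ≤ n - 1`; and `C_a * C_(n-a) ≤ C_(n-1)` because `C_(k+1) / C_k` increases with `k`.
Non-crossing perfect matchings of a `2k`-element chain are counted by `C_k` through the usual
bijection with binary trees.
-/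

open Finset

theorem succ_succ_mul_catalan_succ (m : ℕ) :
    (m + 2) * catalan (m + 1) = 2 * (2 * m + 1) * catalan m := by
  have h := Nat.succ_mul_centralBinom_succ m
  rw [← succ_mul_catalan_eq_centralBinom, ← succ_mul_catalan_eq_centralBinom] at h
  refine Nat.eq_of_mul_eq_mul_left m.succ_pos ?_
  linarith

theorem catalan_succ_mul_catalan_le {a b : ℕ} (hab : a ≤ b) :
    catalan (a + 1) * catalan b ≤ catalan a * catalan (b + 1) := by
  refine le_of_mul_le_mul_left ?_ (by positivity : 0 < (a + 2) * (b + 2))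
  calc (a + 2) * (b + 2) * (catalan (a + 1) * catalan b)
      = ((a + 2) * catalan (a + 1)) * (b + 2) * catalan b := by ring
    _ = 2 * (2 * a + 1) * (b + 2) * (catalan a * catalan b) := by
        rw [succ_succ_mul_catalan_succ]; ring
    _ ≤ (a + 2) * (2 * (2 * b + 1)) * (catalan a * catalan b) :=
        Nat.mul_le_mul_right _ (by nlinarith)
    _ = (a + 2) * catalan a * ((b + 2) * catalan (b + 1)) := by
        rw [succ_succ_mul_catalan_succ]; ring
    _ = (a + 2) * (b + 2) * (catalan a * catalan (b + 1)) := by ring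

theorem catalan_succ_mul_catalan_succ_le (a b : ℕ) :
    catalan (a + 1) * catalan (b + 1) ≤ catalan (a + b + 1) := by
  wlog hab : a ≤ b generalizing a b
  · simpa [mul_comm, add_comm] using this b a (by omega)
  induction a generalizing b with
  | zero => simp [catalan_one]
  | succ a ih =>
    calc catalan (a + 2) * catalan (b + 1) ≤ catalan (a + 1) * catalan (b + 2) :=
          catalan_succ_mul_catalan_le (by omega)
      _ ≤ catalan (a + (b + 1) + 1) := ih (b + 1) (by omega)
      _ = catalan (a + 1 + b + 1) := by ring_nf

section NoncrossingMatching

variable {α β : Type*} [LinearOrder α] [LinearOrder β]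

def Crosses (p q : α × α) : Prop := p.1 < q.1 ∧ q.1 < p.2 ∧ p.2 < q.2

structure IsNoncrossingMatching (s : Finset α) (M : Finset (α × α)) : Prop where
  subset : M ⊆ s ×ˢ s
  lt : ∀ p ∈ M, p.1 < p.2
  exists_mem : ∀ k ∈ s, ∃ p ∈ M, p.1 = k ∨ p.2 = k
  eq_of_endpoint :
    ∀ p ∈ M, ∀ q ∈ M, ∀ k, (p.1 = k ∨ p.2 = k) → (q.1 = k ∨ q.2 = k) → p = q
  not_crosses : ∀ p ∈ M, ∀ q ∈ M, ¬ Crosses p q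

def noncrossingMatchings (s : Finset α) : Set (Finset (α × α)) :=
  {M | IsNoncrossingMatching s M}

namespace IsNoncrossingMatching

variable {s : Finset α} {M : Finset (α × α)} {p q : α × α}

theorem fst_mem (h : IsNoncrossingMatching s M) (hp : p ∈ M) : p.1 ∈ s :=
  (mem_product.1 (h.subset hp)).1

theorem snd_mem (h : IsNoncrossingMatching s M) (hp : p ∈ M) : p.2 ∈ s :=
  (mem_product.1 (h.subset hp)).2

protected theorem empty : IsNoncrossingMatching (∅ : Finset α) ∅ :=
  ⟨empty_subset _, by simp, by simp, by simp, by simp⟩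

theorem mem_of_endpoint (h : IsNoncrossingMatching s M) (hp : p ∈ M) {k : α}
    (hk : p.1 = k ∨ p.2 = k) : k ∈ s := by
  rcases hk with rfl | rfl
  exacts [h.fst_mem hp, h.snd_mem hp]

theorem card_eq (h : IsNoncrossingMatching s M) : s.card = 2 * M.card := by
  have hfst : (M.image Prod.fst).card = M.card := card_image_of_injOn
    fun p hp q hq e => h.eq_of_endpoint p hp q hq _ (.inl rfl) (.inl e.symm)
  have hsnd : (M.image Prod.snd).card = M.card := card_image_of_injOn
    fun p hp q hq e => h.eq_of_endpoint p hp q hq _ (.inr rfl) (.inr e.symm)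
  have hdisj : Disjoint (M.image Prod.fst) (M.image Prod.snd) := by
    simp only [disjoint_left, mem_image]
    rintro _ ⟨p, hp, rfl⟩ ⟨q, hq, e⟩
    obtain rfl := h.eq_of_endpoint p hp q hq _ (.inl rfl) (.inr e)
    exact (h.lt p hp).ne' e
  have hs : s = M.image Prod.fst ∪ M.image Prod.snd := by
    ext k
    simp only [mem_union, mem_image]
    refine ⟨fun hk => ?_, ?_⟩
    · obtain ⟨p, hp, hpk | hpk⟩ := h.exists_mem k hk
      exacts [.inl ⟨p, hp, hpk⟩, .inr ⟨p, hp, hpk⟩]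
    · rintro (⟨p, hp, rfl⟩ | ⟨p, hp, rfl⟩)
      exacts [h.fst_mem hp, h.snd_mem hp]
  rw [hs, card_union_of_disjoint hdisj, hfst, hsnd, two_mul]

theorem image {f : α → β} (hf : StrictMonoOn f s) (h : IsNoncrossingMatching s M) :
    IsNoncrossingMatching (s.image f) (M.image (Prod.map f f)) where
  subset := by
    simp only [Finset.subset_iff, mem_image, mem_product]
    rintro _ ⟨p, hp, rfl⟩
    exact ⟨⟨p.1, h.fst_mem hp, rfl⟩, ⟨p.2, h.snd_mem hp, rfl⟩⟩
  lt := by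
    simp only [forall_mem_image]
    exact fun p hp => hf (h.fst_mem hp) (h.snd_mem hp) (h.lt p hp)
  exists_mem := by
    simp only [forall_mem_image, exists_mem_image]
    intro x hx
    obtain ⟨p, hp, hpx⟩ := h.exists_mem x hx
    exact ⟨p, hp, hpx.imp (congrArg f) (congrArg f)⟩
  eq_of_endpoint := by
    simp only [forall_mem_image]
    intro p hp q hq k hpk hqk
    obtain ⟨x, hx, rfl⟩ : ∃ x ∈ s, f x = k := by
      rcases hpk with rfl | rfl
      exacts [⟨_, h.fst_mem hp, rfl⟩, ⟨_, h.snd_mem hp, rfl⟩]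
    have hinj := hf.injOn
    rw [h.eq_of_endpoint p hp q hq x
      (hpk.imp (hinj (h.fst_mem hp) hx) (hinj (h.snd_mem hp) hx))
      (hqk.imp (hinj (h.fst_mem hq) hx) (hinj (h.snd_mem hq) hx))]
  not_crosses := by
    simp only [forall_mem_image]
    rintro p hp q hq ⟨h₁, h₂, h₃⟩
    exact h.not_crosses p hp q hq ⟨(hf.lt_iff_lt (h.fst_mem hp) (h.fst_mem hq)).1 h₁,
      (hf.lt_iff_lt (h.fst_mem hq) (h.snd_mem hp)).1 h₂,
      (hf.lt_iff_lt (h.snd_mem hp) (h.snd_mem hq)).1 h₃⟩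

theorem filter (P : α → Prop) [DecidablePred P] (hP : ∀ p ∈ M, P p.1 ↔ P p.2)
    (h : IsNoncrossingMatching s M) :
    IsNoncrossingMatching (s.filter P) (M.filter fun p => P p.1) where
  subset := by
    intro p hp
    obtain ⟨hpM, hp₁⟩ := mem_filter.1 hp
    exact mem_product.2 ⟨mem_filter.2 ⟨h.fst_mem hpM, hp₁⟩,
      mem_filter.2 ⟨h.snd_mem hpM, (hP p hpM).1 hp₁⟩⟩
  lt p hp := h.lt p (mem_filter.1 hp).1
  exists_mem k hk := by
    obtain ⟨hks, hPk⟩ := mem_filter.1 hk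
    obtain ⟨p, hp, hpk⟩ := h.exists_mem k hks
    refine ⟨p, mem_filter.2 ⟨hp, ?_⟩, hpk⟩
    rcases hpk with rfl | rfl
    exacts [hPk, (hP p hp).2 hPk]
  eq_of_endpoint p hp q hq := h.eq_of_endpoint p (mem_filter.1 hp).1 q (mem_filter.1 hq).1
  not_crosses p hp q hq := h.not_crosses p (mem_filter.1 hp).1 q (mem_filter.1 hq).1

theorem union {s₁ s₂ : Finset α} {M₁ M₂ : Finset (α × α)}
    (h₁ : IsNoncrossingMatching s₁ M₁) (h₂ : IsNoncrossingMatching s₂ M₂)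
    (hs : Disjoint s₁ s₂)
    (hM : ∀ p ∈ M₁, ∀ q ∈ M₂, ¬ Crosses p q ∧ ¬ Crosses q p) :
    IsNoncrossingMatching (s₁ ∪ s₂) (M₁ ∪ M₂) where
  subset := union_subset (h₁.subset.trans (product_subset_product subset_union_left
    subset_union_left)) (h₂.subset.trans (product_subset_product subset_union_right
    subset_union_right))
  lt p hp := (mem_union.1 hp).elim (h₁.lt p) (h₂.lt p)
  exists_mem k hk := by
    rcases mem_union.1 hk with hk | hk
    · obtain ⟨p, hp, hpk⟩ := h₁.exists_mem k hk
      exact ⟨p, mem_union_left _ hp, hpk⟩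
    · obtain ⟨p, hp, hpk⟩ := h₂.exists_mem k hk
      exact ⟨p, mem_union_right _ hp, hpk⟩
  eq_of_endpoint p hp q hq k hpk hqk := by
    rcases mem_union.1 hp with hp | hp <;> rcases mem_union.1 hq with hq | hq
    · exact h₁.eq_of_endpoint p hp q hq k hpk hqk
    · exact (disjoint_left.1 hs (h₁.mem_of_endpoint hp hpk) (h₂.mem_of_endpoint hq hqk)).elim
    · exact (disjoint_left.1 hs (h₁.mem_of_endpoint hq hqk) (h₂.mem_of_endpoint hp hpk)).elim
    · exact h₂.eq_of_endpoint p hp q hq k hpk hqk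
  not_crosses p hp q hq := by
    rcases mem_union.1 hp with hp | hp <;> rcases mem_union.1 hq with hq | hq
    · exact h₁.not_crosses p hp q hq
    · exact (hM p hp q hq).1
    · exact (hM q hq p hp).2
    · exact h₂.not_crosses p hp q hq

theorem pair {a b : α} (hab : a < b) : IsNoncrossingMatching {a, b} {(a, b)} where
  subset := by simp
  lt := by simpa using hab
  exists_mem := by simp
  eq_of_endpoint := by simp
  not_crosses := by simp [Crosses]

theorem inside_iff (h : IsNoncrossingMatching s M) (hp : p ∈ M) (hq : q ∈ M) :
    (p.1 < q.1 ∧ q.1 < p.2) ↔ (p.1 < q.2 ∧ q.2 < p.2) := by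
  by_cases hpq : p = q
  · subst hpq
    simp only [lt_irrefl, and_false, false_and]
  have hne : ∀ x, (p.1 = x ∨ p.2 = x) → q.1 ≠ x ∧ q.2 ≠ x := fun x hx =>
    ⟨fun e => hpq (h.eq_of_endpoint p hp q hq x hx (.inl e)),
      fun e => hpq (h.eq_of_endpoint p hp q hq x hx (.inr e))⟩
  have h₁ := hne p.1 (.inl rfl)
  have h₂ := hne p.2 (.inr rfl)
  have hpq' := h.not_crosses p hp q hq
  have hqp := h.not_crosses q hq p hp
  have := h.lt q hq
  unfold Crosses at hpq' hqp
  constructor <;> rintro ⟨h₃, h₄⟩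
  · exact ⟨by order, lt_of_not_ge fun hc =>
      hpq' ⟨h₃, h₄, lt_of_le_of_ne hc h₂.2.symm⟩⟩
  · exact ⟨lt_of_not_ge fun hc => hqp ⟨lt_of_le_of_ne hc h₁.1, h₃, h₄⟩, by order⟩

theorem inside (h : IsNoncrossingMatching s M) (hp : p ∈ M) :
    IsNoncrossingMatching (s.filter fun x => p.1 < x ∧ x < p.2)
      (M.filter fun q => p.1 < q.1 ∧ q.1 < p.2) :=
  h.filter _ fun _ hq => h.inside_iff hp hq

theorem even_card_inside (h : IsNoncrossingMatching s M) (hp : p ∈ M) :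
    Even (s.filter fun x => p.1 < x ∧ x < p.2).card :=
  even_iff_two_dvd.2 ⟨_, (h.inside hp).card_eq⟩

theorem outside_iff_of_min (h : IsNoncrossingMatching s M) (hp : p ∈ M)
    (hmin : ∀ x ∈ s, p.1 ≤ x) (hq : q ∈ M) : p.2 < q.1 ↔ p.2 < q.2 := by
  by_cases hpq : p = q
  · subst hpq
    have := h.lt p hp
    constructor <;> intro <;> order
  have hne₁ : q.1 ≠ p.1 := fun e => hpq (h.eq_of_endpoint p hp q hq _ (.inl rfl) (.inl e))
  have hne₂ : q.1 ≠ p.2 := fun e => hpq (h.eq_of_endpoint p hp q hq _ (.inr rfl) (.inl e))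
  have hpq' := h.not_crosses p hp q hq
  have hmin₁ := hmin q.1 (h.fst_mem hq)
  have := h.lt q hq
  unfold Crosses at hpq'
  exact ⟨fun _ => by order, fun h₂ => lt_of_not_ge fun hc =>
    hpq' ⟨lt_of_le_of_ne hmin₁ hne₁.symm, lt_of_le_of_ne hc hne₂, h₂⟩⟩

theorem outside (h : IsNoncrossingMatching s M) (hp : p ∈ M) (hmin : ∀ x ∈ s, p.1 ≤ x) :
    IsNoncrossingMatching (s.filter fun x => p.2 < x) (M.filter fun q => p.2 < q.1) :=
  h.filter _ fun _ hq => h.outside_iff_of_min hp hmin hq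

theorem eq_insert_inside_union_outside (h : IsNoncrossingMatching s M) (hp : p ∈ M)
    (hmin : ∀ x ∈ s, p.1 ≤ x) :
    M = insert p ((M.filter fun q => p.1 < q.1 ∧ q.1 < p.2) ∪ M.filter fun q => p.2 < q.1) := by
  ext q
  simp only [mem_insert, mem_union, mem_filter]
  refine ⟨fun hq => or_iff_not_imp_left.2 fun hpq => ?_, ?_⟩
  · have hne₁ : q.1 ≠ p.1 := fun e => hpq (h.eq_of_endpoint q hq p hp _ (.inl e) (.inl rfl))
    have hne₂ : q.1 ≠ p.2 := fun e => hpq (h.eq_of_endpoint q hq p hp _ (.inl e) (.inr rfl))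
    have := hmin q.1 (h.fst_mem hq)
    rcases lt_or_gt_of_ne hne₂ with h₂ | h₂
    exacts [.inl ⟨hq, lt_of_le_of_ne this hne₁.symm, h₂⟩, .inr ⟨hq, h₂⟩]
  · rintro (rfl | ⟨hq, -⟩ | ⟨hq, -⟩) <;> assumption

end IsNoncrossingMatching

theorem finite_noncrossingMatchings (s : Finset α) : (noncrossingMatchings s).Finite :=
  (s ×ˢ s).powerset.finite_toSet.subset fun _ hM => mem_powerset.2 hM.subset

theorem noncrossingMatchings_empty : noncrossingMatchings (∅ : Finset α) = {∅} := by
  ext M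
  refine ⟨fun h => subset_empty.1 (by simpa using h.subset), ?_⟩
  rintro rfl
  exact .empty

theorem ncard_noncrossingMatchings_le_image {s : Finset α} {f : α → β}
    (hf : StrictMonoOn f s) :
    (noncrossingMatchings s).ncard ≤ (noncrossingMatchings (s.image f)).ncard :=
  Set.ncard_le_ncard_of_injOn _ (fun _ hM => hM.image hf)
    ((image_injOn_powerset_of_injOn (by
      rw [coe_product]; exact hf.injOn.prodMap hf.injOn)).mono
      fun _ hM => mem_powerset.2 hM.subset)
    (finite_noncrossingMatchings _)

theorem ncard_noncrossingMatchings_image {s : Finset α} {f : α → β}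
    (hf : StrictMonoOn f s) :
    (noncrossingMatchings (s.image f)).ncard = (noncrossingMatchings s).ncard := by
  refine le_antisymm ?_ (ncard_noncrossingMatchings_le_image hf)
  rcases s.eq_empty_or_nonempty with rfl | ⟨x, -⟩
  · simp only [image_empty, noncrossingMatchings_empty, Set.ncard_singleton, le_refl]
  have : Nonempty α := ⟨x⟩
  have hinv : ∀ x ∈ s, Function.invFunOn f s (f x) = x := fun x hx =>
    hf.injOn.leftInvOn_invFunOn hx
  have hg : StrictMonoOn (Function.invFunOn f s) (s.image f) := by
    simp only [StrictMonoOn, coe_image, Set.forall_mem_image]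
    intro x hx y hy hxy
    rwa [hinv x hx, hinv y hy, ← hf.lt_iff_lt hx hy]
  have hs : (s.image f).image (Function.invFunOn f s) = s := by
    rw [image_image]
    exact (image_congr fun x hx => hinv x hx).trans image_id
  simpa only [hs] using ncard_noncrossingMatchings_le_image hg

theorem ncard_le_ncard_filter_mul_ncard_filter_not {s : Finset α} (P : α → Prop)
    [DecidablePred P]
    (V : Set (Finset (α × α)))
    (hV : ∀ M ∈ V, IsNoncrossingMatching s M ∧ ∀ p ∈ M, P p.1 ↔ P p.2) :
    V.ncard ≤ (noncrossingMatchings (s.filter P)).ncard *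
      (noncrossingMatchings (s.filter fun x => ¬ P x)).ncard := by
  rw [← Set.ncard_prod]
  refine Set.ncard_le_ncard_of_injOn
    (fun M => (M.filter fun p => P p.1, M.filter fun p => ¬ P p.1)) (fun M hM => ?_)
    (fun M₁ _ M₂ _ e => ?_)
    ((finite_noncrossingMatchings _).prod (finite_noncrossingMatchings _))
  · obtain ⟨h, hP⟩ := hV M hM
    exact ⟨h.filter P hP, h.filter _ fun p hp => not_congr (hP p hp)⟩
  · obtain ⟨e₁, e₂⟩ := Prod.mk.inj e
    rw [← filter_union_filter_not_eq (fun p => P p.1) M₁, e₁, e₂,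
      filter_union_filter_not_eq]

end NoncrossingMatching

section BinaryTree

open BinaryTree

abbrev shiftArc (c : ℕ) : ℕ × ℕ → ℕ × ℕ := Prod.map (· + c) (· + c)

theorem shiftArc_injective (c : ℕ) : Function.Injective (shiftArc c) :=
  (add_left_injective c).prodMap (add_left_injective c)

theorem IsNoncrossingMatching.shift {m : ℕ} {M : Finset (ℕ × ℕ)}
    (h : IsNoncrossingMatching (range m) M) (c : ℕ) :
    IsNoncrossingMatching (Ico c (m + c)) (M.image (shiftArc c)) := by
  have hf : StrictMonoOn (· + c) (range m : Set ℕ) := fun _ _ _ _ hxy => by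
    simpa using hxy
  have := h.image hf
  rwa [range_eq_Ico, image_add_right_Ico, zero_add] at this

theorem IsNoncrossingMatching.exists_eq_image_shiftArc {c m : ℕ} {N : Finset (ℕ × ℕ)}
    (h : IsNoncrossingMatching (Ico c (m + c)) N) :
    ∃ M, IsNoncrossingMatching (range m) M ∧ M.image (shiftArc c) = N := by
  have hsub : StrictMonoOn (· - c) (Ico c (m + c) : Set ℕ) := fun x hx y hy hxy => by
    simp only [coe_Ico, Set.mem_Ico] at hx hy
    dsimp only
    omega
  refine ⟨N.image (Prod.map (· - c) (· - c)), ?_, ?_⟩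
  · have := h.image hsub
    rwa [Nat.image_sub_const_Ico le_rfl, Nat.sub_self, Nat.add_sub_cancel, ← range_eq_Ico]
      at this
  · rw [image_image]
    refine (image_congr fun q hq => ?_).trans image_id
    have h₁ := mem_Ico.1 (h.fst_mem hq)
    have h₂ := mem_Ico.1 (h.snd_mem hq)
    ext <;> simp only [Function.comp_apply, Prod.map_fst, Prod.map_snd, id] <;> omega

theorem IsNoncrossingMatching.node {k l : ℕ} {M₁ M₂ : Finset (ℕ × ℕ)}
    (h₁ : IsNoncrossingMatching (range (2 * k)) M₁)
    (h₂ : IsNoncrossingMatching (range (2 * l)) M₂) :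
    IsNoncrossingMatching (range (2 * k + 2 * l + 2))
      (insert (0, 2 * k + 1) (M₁.image (shiftArc 1) ∪ M₂.image (shiftArc (2 * k + 2)))) := by
  have g₁ := h₁.shift 1
  have g₂ := h₂.shift (2 * k + 2)
  rw [insert_eq, ← union_assoc]
  convert ((pair (by omega : 0 < 2 * k + 1)).union g₁ ?_ ?_).union g₂ ?_ ?_ using 1
  · ext x
    simp only [mem_range, mem_union, mem_insert, mem_singleton, mem_Ico]
    omega
  · simp only [disjoint_left, mem_insert, mem_singleton, mem_Ico]
    omega
  · simp only [mem_singleton, forall_eq, Crosses]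
    intro q hq
    have := mem_Ico.1 (g₁.fst_mem hq)
    have := mem_Ico.1 (g₁.snd_mem hq)
    omega
  · simp only [disjoint_left, mem_union, mem_insert, mem_singleton, mem_Ico]
    omega
  · intro p hp q hq
    have hp₂ : p.2 < 2 * k + 2 := by
      rcases mem_union.1 hp with hp | hp
      · simp [mem_singleton.1 hp]
      · exact (mem_Ico.1 (g₁.snd_mem hp)).2.trans (by omega)
    have := mem_Ico.1 (g₂.fst_mem hq)
    simp only [Crosses]
    omega

theorem IsNoncrossingMatching.exists_eq_node {m : ℕ} {M : Finset (ℕ × ℕ)} (hm : 0 < m)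
    (h : IsNoncrossingMatching (range m) M) :
    ∃ k l M₁ M₂, m = 2 * k + 2 * l + 2 ∧ IsNoncrossingMatching (range (2 * k)) M₁ ∧
      IsNoncrossingMatching (range (2 * l)) M₂ ∧
      M = insert (0, 2 * k + 1)
        (M₁.image (shiftArc 1) ∪ M₂.image (shiftArc (2 * k + 2))) := by
  obtain ⟨p, hp, hp0⟩ := h.exists_mem 0 (mem_range.2 hm)
  have hlt := h.lt p hp
  have hp₁ : p.1 = 0 := hp0.resolve_right (by omega)
  have hp₂ := mem_range.1 (h.snd_mem hp)
  have hmin : ∀ x ∈ range m, p.1 ≤ x := by simp [hp₁]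
  have hin := h.inside hp
  have hout := h.outside hp hmin
  rw [show (range m).filter (fun x => p.1 < x ∧ x < p.2) = Ico 1 p.2 by
    ext x; simp only [mem_filter, mem_range, mem_Ico]; omega] at hin
  rw [show (range m).filter (fun x => p.2 < x) = Ico (p.2 + 1) m by
    ext x; simp only [mem_filter, mem_range, mem_Ico]; omega] at hout
  set k := (M.filter fun q => p.1 < q.1 ∧ q.1 < p.2).card
  set l := (M.filter fun q => p.2 < q.1).card
  have hk : p.2 = 2 * k + 1 := by have := hin.card_eq; rw [Nat.card_Ico] at this; omega
  have hl : m = 2 * l + (2 * k + 2) := by have := hout.card_eq; rw [Nat.card_Ico] at this; omega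
  rw [show Ico 1 p.2 = Ico 1 (2 * k + 1) by rw [hk]] at hin
  rw [show Ico (p.2 + 1) m = Ico (2 * k + 2) (2 * l + (2 * k + 2)) by rw [hk, ← hl]] at hout
  obtain ⟨M₁, h₁, e₁⟩ := hin.exists_eq_image_shiftArc
  obtain ⟨M₂, h₂, e₂⟩ := hout.exists_eq_image_shiftArc
  refine ⟨k, l, M₁, M₂, by omega, h₁, h₂, ?_⟩
  rw [e₁, e₂, show (0, 2 * k + 1) = p by rw [← hp₁, ← hk]]
  exact h.eq_insert_inside_union_outside hp hmin

/-- The root of `node l r` becomes the arc `(0, 2 * l.numNodes + 1)`, which encloses the arcs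
of `l` and is followed by those of `r`. -/
def BinaryTree.toMatching : BinaryTree Unit → Finset (ℕ × ℕ)
  | nil => ∅
  | node _ l r => insert (0, 2 * l.numNodes + 1)
      (l.toMatching.image (shiftArc 1) ∪ r.toMatching.image (shiftArc (2 * l.numNodes + 2)))

namespace BinaryTree

theorem isNoncrossingMatching_toMatching (t : BinaryTree Unit) :
    IsNoncrossingMatching (range (2 * t.numNodes)) t.toMatching := by
  induction t with
  | nil => exact .empty
  | node _ l r ihl ihr =>
    rw [numNodes, show 2 * (l.numNodes + r.numNodes + 1) =
      2 * l.numNodes + 2 * r.numNodes + 2 by ring]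
    exact ihl.node ihr

theorem exists_toMatching_eq {m : ℕ} {M : Finset (ℕ × ℕ)}
    (h : IsNoncrossingMatching (range m) M) :
    ∃ t : BinaryTree Unit, 2 * t.numNodes = m ∧ t.toMatching = M := by
  induction m using Nat.strong_induction_on generalizing M with
  | _ m ih =>
  rcases Nat.eq_zero_or_pos m with rfl | hm
  · refine ⟨nil, rfl, ?_⟩
    have : M ∈ noncrossingMatchings (∅ : Finset ℕ) := h
    rw [noncrossingMatchings_empty] at this
    exact this.symm
  obtain ⟨k, l, M₁, M₂, rfl, h₁, h₂, rfl⟩ := h.exists_eq_node hm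
  obtain ⟨t₁, ht₁, rfl⟩ := ih _ (by omega) h₁
  obtain ⟨t₂, ht₂, rfl⟩ := ih _ (by omega) h₂
  refine ⟨node () t₁ t₂, by rw [numNodes]; omega, ?_⟩
  rw [toMatching, show t₁.numNodes = k by omega]

theorem toMatching_node_filter_inside (l r : BinaryTree Unit) :
    (node () l r).toMatching.filter (fun q => 0 < q.1 ∧ q.1 < 2 * l.numNodes + 1) =
      l.toMatching.image (shiftArc 1) := by
  have hl := (isNoncrossingMatching_toMatching l).shift 1
  have hr := (isNoncrossingMatching_toMatching r).shift (2 * l.numNodes + 2)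
  rw [toMatching, filter_insert, if_neg (by simp), filter_union, filter_true_of_mem,
    filter_false_of_mem, union_empty]
  · intro q hq; have := mem_Ico.1 (hr.fst_mem hq); omega
  · intro q hq; have := mem_Ico.1 (hl.fst_mem hq); omega

theorem toMatching_node_filter_outside (l r : BinaryTree Unit) :
    (node () l r).toMatching.filter (fun q => 2 * l.numNodes + 1 < q.1) =
      r.toMatching.image (shiftArc (2 * l.numNodes + 2)) := by
  have hl := (isNoncrossingMatching_toMatching l).shift 1
  have hr := (isNoncrossingMatching_toMatching r).shift (2 * l.numNodes + 2)
  rw [toMatching, filter_insert, if_neg (by simp), filter_union,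
    filter_true_of_mem (s := image _ r.toMatching), filter_false_of_mem, empty_union]
  · intro q hq; have := mem_Ico.1 (hl.fst_mem hq); omega
  · intro q hq; have := mem_Ico.1 (hr.fst_mem hq); omega

theorem toMatching_injective : Function.Injective (toMatching : BinaryTree Unit → _) := by
  intro t₁ t₂ h
  induction t₁ generalizing t₂ with
  | nil =>
    cases t₂ with
    | nil => rfl
    | node _ l r => exact absurd h.symm (insert_ne_empty _ _)
  | node u l r ihl ihr =>
    cases t₂ with
    | nil => exact absurd h (insert_ne_empty _ _)
    | node u' l' r' =>
      cases u; cases u'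
      have hroot' : (0, 2 * l'.numNodes + 1) ∈ (node () l r).toMatching := by
        rw [h]; exact mem_insert_self _ _
      have hroot := (isNoncrossingMatching_toMatching (node () l r)).eq_of_endpoint _
        (mem_insert_self _ _) _ hroot' 0 (.inl rfl) (.inl rfl)
      have hn : l.numNodes = l'.numNodes := by simpa using hroot
      have hl := toMatching_node_filter_inside l r
      have hr := toMatching_node_filter_outside l r
      rw [h, hn, toMatching_node_filter_inside] at hl
      rw [h, hn, toMatching_node_filter_outside] at hr
      rw [ihl (image_injective (shiftArc_injective _) hl).symm,
        ihr (image_injective (shiftArc_injective _) hr).symm]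

end BinaryTree

theorem ncard_noncrossingMatchings_range (k : ℕ) :
    (noncrossingMatchings (range (2 * k))).ncard = catalan k := by
  rw [← treesOfNumNodesEq_card_eq_catalan, ← Set.ncard_coe_finset, coe_treesOfNumNodesEq,
    ← BinaryTree.toMatching_injective.injOn.ncard_image]
  congr 1
  ext M
  refine ⟨fun h => ?_, ?_⟩
  · obtain ⟨t, ht, rfl⟩ := BinaryTree.exists_toMatching_eq h
    exact ⟨t, show t.numNodes = k by omega, rfl⟩
  · rintro ⟨t, rfl, rfl⟩
    exact t.isNoncrossingMatching_toMatching

end BinaryTree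

section Counting

variable {α : Type*} [LinearOrder α]

theorem ncard_noncrossingMatchings_of_card_eq {s : Finset α} {k : ℕ} (hs : s.card = 2 * k) :
    (noncrossingMatchings s).ncard = catalan k := by
  rw [← image_orderEmbOfFin_univ s hs,
    ncard_noncrossingMatchings_image ((s.orderEmbOfFin hs).strictMono.strictMonoOn _),
    ← ncard_noncrossingMatchings_image (Fin.val_strictMono.strictMonoOn _), image_fin_univ,
    ncard_noncrossingMatchings_range]

theorem ncard_noncrossingMatchings_of_odd {s : Finset α} (hs : Odd s.card) :
    (noncrossingMatchings s).ncard = 0 := by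
  have : noncrossingMatchings s = ∅ := Set.eq_empty_of_forall_notMem fun M h =>
    Nat.not_even_iff_odd.2 hs ⟨M.card, by rw [h.card_eq, two_mul]⟩
  rw [this, Set.ncard_empty]

theorem ncard_filter_mul_ncard_filter_not_le {s : Finset α} {n : ℕ} (P : α → Prop)
    [DecidablePred P]
    (hs : s.card = 2 * n) (hpos : 0 < (s.filter P).card) (hlt : (s.filter P).card < s.card) :
    (noncrossingMatchings (s.filter P)).ncard *
      (noncrossingMatchings (s.filter fun x => ¬ P x)).ncard ≤ catalan (n - 1) := by
  have hsum := card_filter_add_card_filter_not (s := s) P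
  rcases Nat.even_or_odd (s.filter P).card with ⟨a, ha⟩ | hodd
  · obtain ⟨b, rfl⟩ : ∃ b, a = b + 1 := ⟨a - 1, by omega⟩
    obtain ⟨c, hc⟩ : ∃ c, n = b + c + 2 := ⟨n - b - 2, by omega⟩
    rw [ncard_noncrossingMatchings_of_card_eq (k := b + 1) (by omega),
      ncard_noncrossingMatchings_of_card_eq (k := c + 1) (by omega), hc]
    exact catalan_succ_mul_catalan_succ_le b c
  · rw [ncard_noncrossingMatchings_of_odd hodd, zero_mul]
    exact Nat.zero_le _

end Counting

theorem isPlaneTreeF_iff {n : ℕ} {M : Finset (Fin (2 * n) × Fin (2 * n))} :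
    IsPlaneTreeF n M ↔ IsNoncrossingMatching univ M := by
  refine ⟨fun ⟨⟨hlt, hex⟩, hnc⟩ => ⟨?_, hlt, fun k _ => ?_, ?_, hnc⟩,
    fun h => ⟨⟨h.lt, fun k => ?_⟩, h.not_crosses⟩⟩
  · simp
  · obtain ⟨p, ⟨hp, hpk⟩, -⟩ := hex k
    exact ⟨p, hp, hpk⟩
  · intro p hp q hq k hpk hqk
    obtain ⟨r, -, hr⟩ := hex k
    exact (hr p ⟨hp, hpk⟩).trans (hr q ⟨hq, hqk⟩).symm
  · obtain ⟨p, hp, hpk⟩ := h.exists_mem k (mem_univ k)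
    exact ⟨p, ⟨hp, hpk⟩, fun q ⟨hq, hqk⟩ => h.eq_of_endpoint q hq p hp k hqk hpk⟩

theorem IsNoncrossingMatching.odd_val_add {m : ℕ} {M : Finset (Fin m × Fin m)}
    (h : IsNoncrossingMatching univ M) {p : Fin m × Fin m} (hp : p ∈ M) :
    Odd (p.1.val + p.2.val) := by
  have he := h.even_card_inside hp
  have hlt : p.1.val < p.2.val := h.lt p hp
  rw [show (univ.filter fun x => p.1 < x ∧ x < p.2) = Ioo p.1 p.2 by ext; simp,
    Fin.card_Ioo] at he
  obtain ⟨r, hr⟩ := he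
  exact ⟨p.1 + r, by omega⟩

def alternating {A : Type*} (comp : A → A) (b : A) (i : ℕ) : A :=
  if Even i then b else comp b

theorem alternating_of_odd_add {A : Type*} {comp : A → A} (hinv : Function.Involutive comp)
    (b : A) {i j : ℕ} (h : Odd (i + j)) : alternating comp b j = comp (alternating comp b i) := by
  rw [Nat.odd_add'] at h
  unfold alternating
  by_cases hi : Even i
  · rw [if_pos hi, if_neg (Nat.not_even_iff_odd.2 (h.2 hi))]
  · rw [if_neg hi, if_pos (by_contra fun hj => hi (h.1 (Nat.not_even_iff_odd.1 hj))), hinv]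

theorem isValidF_alternating {A : Type*} {comp : A → A} (hinv : Function.Involutive comp)
    (b : A) {n : ℕ} {M : Finset (Fin (2 * n) × Fin (2 * n))}
    (h : IsNoncrossingMatching univ M) : IsValidF n (fun i => alternating comp b i) comp M :=
  fun _ hp => alternating_of_odd_add hinv b (h.odd_val_add hp)

theorem valid_tree_count_gap_general {A : Type*}
    (comp : A → A) (hinv : Function.Involutive comp)
    (n : ℕ) (P : Fin (2 * n) → A)
    (hlt : Set.ncard {M : Finset (Fin (2 * n) × Fin (2 * n)) |
      IsPlaneTreeF n M ∧ IsValidF n P comp M} < catalan n) :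
    Set.ncard {M : Finset (Fin (2 * n) × Fin (2 * n)) |
      IsPlaneTreeF n M ∧ IsValidF n P comp M} ≤ catalan (n - 1) := by
  classical
  rcases Nat.eq_zero_or_pos n with rfl | hn
  · simpa using hlt.le
  simp only [isPlaneTreeF_iff] at hlt ⊢
  set b := P ⟨0, by omega⟩
  have hclosed : ∀ M ∈ {M | IsNoncrossingMatching univ M ∧ IsValidF n P comp M},
      IsNoncrossingMatching univ M ∧
        ∀ p ∈ M, P p.1 = alternating comp b p.1 ↔ P p.2 = alternating comp b p.2 := by
    rintro M ⟨h, hval⟩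
    refine ⟨h, fun p hp => ?_⟩
    rw [hval p hp, alternating_of_odd_add hinv b (h.odd_val_add hp), hinv.injective.eq_iff]
  refine (ncard_le_ncard_filter_mul_ncard_filter_not
    (fun i => P i = alternating comp b i) _ hclosed).trans
    (ncard_filter_mul_ncard_filter_not_le _ (by simp) ?_ ?_)
  · exact card_pos.2 ⟨⟨0, by omega⟩, by simp [b, alternating]⟩
  refine (card_filter_le _ _).lt_of_ne fun hall => hlt.not_ge ?_
  have hPW : P = fun i : Fin (2 * n) => alternating comp b i :=
    funext fun i => card_filter_eq_iff.1 hall i (mem_univ i)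
  rw [← ncard_noncrossingMatchings_of_card_eq (s := (univ : Finset (Fin (2 * n)))) (by simp)]
  exact Set.ncard_le_ncard (fun M h => ⟨h, hPW ▸ isValidF_alternating hinv b h⟩)
    ((finite_noncrossingMatchings univ).subset fun _ hM => hM.1)

/-- If a word of length `2n` has strictly fewer than `C_n` valid
plane trees, then it has at most `C_{n-1}` of them (so no word has `k` valid
plane trees with `C_{n-1} < k < C_n`). -/
theorem valid_tree_count_gap {A : Type*}
    (comp : A → A) (hinv : Function.Involutive comp) (hff : ∀ a, comp a ≠ a)
    (n : ℕ) (hn : 1 ≤ n) (P : Fin (2 * n) → A)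
    (hlt : Set.ncard {M : Finset (Fin (2 * n) × Fin (2 * n)) |
      IsPlaneTreeF n M ∧ IsValidF n P comp M} < catalan n) :
    Set.ncard {M : Finset (Fin (2 * n) × Fin (2 * n)) |
      IsPlaneTreeF n M ∧ IsValidF n P comp M} ≤ catalan (n - 1) :=
  valid_tree_count_gap_general comp hinv n P hlt
end
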